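/- Let f ∈ F_q[t] with deg f ≥ 1 be reducible and suppose f ≠ b(t+c)² for all b, c ∈ F_q. Then δ(S(f)) ≤ δ(f)/q, and equality holds if and only if (q = 2 or q = 3) and f = t³. -/

import Mathlib

open Polynomial UniqueFactorizationMonoid Finset

lemma geom_mul (b K : ℕ) (hb : 1 ≤ b) :
    ∑ j ∈ Finset.range K, (b - 1) * b ^ j = b ^ K - 1 := by
  induction K with
  | zero => simp
  | succ K ih =>
    rw [Finset.sum_range_succ, ih]
    have h1 : 1 ≤ b ^ K := Nat.one_le_pow _ _ hb
    have h2 : b ^ K ≤ b ^ (K + 1) := Nat.pow_le_pow_right hb (by omega)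
    have h3 : (b - 1) * b ^ K = b * b ^ K - b ^ K := by rw [Nat.sub_mul, one_mul]
    have h4 : b ^ (K + 1) = b * b ^ K := by rw [pow_succ, mul_comm]
    omega

lemma sum_lt_pow (q L : ℕ) (hq : 0 < q) (i : ℕ → ℕ) (T : Finset ℕ)
    (hi : ∀ j ∈ T, i j < q) (hT : ∀ j ∈ T, j < L) :
    ∑ j ∈ T, i j * q ^ j < q ^ L := by
  have h1 : ∑ j ∈ T, i j * q ^ j ≤ ∑ j ∈ T, (q - 1) * q ^ j :=
    Finset.sum_le_sum fun j hj => Nat.mul_le_mul_right _ (by have := hi j hj; omega)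
  have h2 : ∑ j ∈ T, (q - 1) * q ^ j ≤ ∑ j ∈ Finset.range L, (q - 1) * q ^ j :=
    Finset.sum_le_sum_of_subset_of_nonneg
      (fun j hj => Finset.mem_range.2 (hT j hj)) (fun _ _ _ => Nat.zero_le _)
  have h3 := geom_mul q L hq
  have h4 : 1 ≤ q ^ L := Nat.one_le_pow _ _ hq
  omega

lemma mod_pow_succ' (q K m : ℕ) (hq : 0 < q) :
    m % q ^ (K + 1) = m % q ^ K + q ^ K * (m / q ^ K % q) := by
  have hqK : 0 < q ^ K := pow_pos hq K
  have h1 : m = q ^ (K+1) * (m / q ^ K / q) + (q ^ K * (m / q ^ K % q) + m % q ^ K) := by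
    conv_lhs => rw [← Nat.div_add_mod m (q ^ K)]
    conv_lhs => rw [← Nat.div_add_mod (m / q ^ K) q]
    ring
  have h2 : q ^ K * (m / q ^ K % q) + m % q ^ K < q ^ (K + 1) := by
    have ha := Nat.mod_lt (m / q ^ K) hq
    have hb := Nat.mod_lt m hqK
    calc q ^ K * (m / q ^ K % q) + m % q ^ K < q ^ K * (m / q ^ K % q) + q ^ K := by omega
      _ = q ^ K * (m / q ^ K % q + 1) := by ring
      _ ≤ q ^ K * q := Nat.mul_le_mul_left _ (by omega)
      _ = q ^ (K + 1) := by rw [pow_succ]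
  conv_lhs => rw [h1]
  rw [Nat.mul_add_mod, Nat.mod_eq_of_lt h2]
  omega

lemma digit_sum_eq_mod (q m K : ℕ) (hq : 0 < q) :
    ∑ j ∈ Finset.range K, m / q ^ j % q * q ^ j = m % q ^ K := by
  induction K with
  | zero => simp [Nat.mod_one]
  | succ K ih =>
    rw [Finset.sum_range_succ, ih, mod_pow_succ' q K m hq]
    ring

lemma digit_of_sum (q K k : ℕ) (i : ℕ → ℕ) (hq : 0 < q) (hi : ∀ j, j < K → i j < q) :
    (∑ j ∈ Finset.range K, i j * q ^ j) / q ^ k % q = if k < K then i k else 0 := by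
  have hqk : 0 < q ^ k := pow_pos hq k
  by_cases hk : k < K
  · simp only [hk, if_true]
    set A := ∑ j ∈ Finset.range k, i j * q ^ j with hA
    set Bs := ∑ j ∈ Finset.Ico (k+1) K, i j * q ^ (j - (k+1)) with hBs
    have hsplit : ∑ j ∈ Finset.range K, i j * q ^ j = A + q ^ k * (i k + q * Bs) := by
      have e1 : ∑ j ∈ Finset.Ico 0 (k+1), i j * q ^ j + ∑ j ∈ Finset.Ico (k+1) K, i j * q ^ j
          = ∑ j ∈ Finset.Ico 0 K, i j * q ^ j :=
        Finset.sum_Ico_consecutive _ (Nat.zero_le _) hk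
      have e2 : ∑ j ∈ Finset.Ico (k+1) K, i j * q ^ j = q ^ (k+1) * Bs := by
        rw [hBs, Finset.mul_sum]
        apply Finset.sum_congr rfl
        intro j hj
        have hj1 : k + 1 ≤ j := (Finset.mem_Ico.1 hj).1
        have : q ^ (k+1) * q ^ (j - (k+1)) = q ^ j := by
          rw [← pow_add]; congr 1; omega
        calc i j * q ^ j = i j * (q ^ (k+1) * q ^ (j - (k+1))) := by rw [this]
          _ = q ^ (k+1) * (i j * q ^ (j - (k+1))) := by ring
      have e3 : ∑ j ∈ Finset.Ico 0 (k+1), i j * q ^ j = A + i k * q ^ k := by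
        rw [← Finset.range_eq_Ico, Finset.sum_range_succ]
      rw [Finset.range_eq_Ico, ← e1, e3, e2]
      ring
    have hAlt : A < q ^ k := sum_lt_pow q k hq i (Finset.range k)
      (fun j hj => hi j (by have := Finset.mem_range.1 hj; omega))
      (fun j hj => Finset.mem_range.1 hj)
    rw [hsplit, Nat.add_mul_div_left _ _ hqk, Nat.div_eq_of_lt hAlt, Nat.zero_add,
      Nat.add_mul_mod_self_left, Nat.mod_eq_of_lt (hi k hk)]
  · simp only [hk, if_false]
    have : ∑ j ∈ Finset.range K, i j * q ^ j < q ^ k := by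
      have h1 := sum_lt_pow q K hq i (Finset.range K) (fun j hj => hi j (Finset.mem_range.1 hj))
        (fun j hj => Finset.mem_range.1 hj)
      have h2 : q ^ K ≤ q ^ k := Nat.pow_le_pow_right hq (by omega)
      omega
    rw [Nat.div_eq_of_lt this, Nat.zero_mod]


set_option linter.unusedSectionVars false

variable {F : Type*} [Field F] [Fintype F] [DecidableEq F]

/-- `delta a f` is the natural number attached to the polynomial `f` via the
enumeration `a : Fin q ≃ F` of the field (`q = Fintype.card F`): if
`f = a_{i_0} + a_{i_1} t + ⋯ + a_{i_n} t^n` then `delta a f = i_0 + i_1 q + ⋯ + i_n q^n`.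
In particular `delta a 0 = 0` whenever `a 0 = 0`. -/
noncomputable def delta (a : Fin (Fintype.card F) ≃ F) (f : F[X]) : ℕ :=
  ∑ j ∈ Finset.range (f.natDegree + 1), (a.symm (f.coeff j) : ℕ) * Fintype.card F ^ j

/-- The inverse of `delta`: the polynomial whose `j`-th coefficient is the `j`-th
base-`q` digit of `m` (under the enumeration `a`). -/
noncomputable def deltaInv (a : Fin (Fintype.card F) ≃ F) (m : ℕ) : F[X] :=
  ∑ j ∈ Finset.range (m + 1),
    C (a ⟨m / Fintype.card F ^ j % Fintype.card F, Nat.mod_lt _ Fintype.card_pos⟩) * X ^ j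


section Delta

variable (a : Fin (Fintype.card F) ≃ F)

local notation "qc" => Fintype.card F

lemma two_le_q : 2 ≤ Fintype.card F := Fintype.one_lt_card

lemma a_mk_congr {x y : ℕ} (hx : x < Fintype.card F) (hy : y < Fintype.card F) (h : x = y) :
    a ⟨x, hx⟩ = a ⟨y, hy⟩ := by subst h; rfl

lemma a_mk_zero (h0 : a 0 = 0) {x : ℕ} (hx : x < Fintype.card F) (h : x = 0) :
    a ⟨x, hx⟩ = 0 := by
  subst h; rw [← h0]; exact congrArg a (Fin.ext (Fin.val_zero _).symm)

lemma deltaInv_coeff (h0 : a 0 = 0) (m j : ℕ) :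
    (deltaInv a m).coeff j
      = a ⟨m / Fintype.card F ^ j % Fintype.card F, Nat.mod_lt _ Fintype.card_pos⟩ := by
  unfold deltaInv
  rw [finset_sum_coeff]
  simp only [coeff_C_mul, coeff_X_pow, mul_ite, mul_one, mul_zero]
  rw [Finset.sum_ite_eq (Finset.range (m + 1)) j]
  by_cases hj : j ∈ Finset.range (m + 1)
  · simp [hj]
  · simp only [hj, if_false]
    have hjm : m + 1 ≤ j := by
      by_contra h; exact hj (Finset.mem_range.2 (by omega))
    have hm : m < Fintype.card F ^ j := by
      have h1 : m < 2 ^ j := by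
        have := Nat.lt_two_pow_self (n := m)
        have h2 : (2:ℕ) ^ m ≤ 2 ^ j := Nat.pow_le_pow_right (by omega) (by omega)
        omega
      have h2 : (2:ℕ) ^ j ≤ Fintype.card F ^ j := Nat.pow_le_pow_left (two_le_q (F := F)) j
      omega
    rw [eq_comm]
    exact a_mk_zero a h0 _ (by rw [Nat.div_eq_of_lt hm, Nat.zero_mod])

lemma deltaInv_coeff_zero (h0 : a 0 = 0) {m j : ℕ} (h : m < Fintype.card F ^ j) :
    (deltaInv a m).coeff j = 0 := by
  rw [deltaInv_coeff a h0]
  exact a_mk_zero a h0 _ (by rw [Nat.div_eq_of_lt h, Nat.zero_mod])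

lemma natDegree_deltaInv_le (h0 : a 0 = 0) {m K : ℕ} (hm : m < Fintype.card F ^ (K + 1)) :
    (deltaInv a m).natDegree ≤ K := by
  rw [natDegree_le_iff_coeff_eq_zero]
  intro j hj
  apply deltaInv_coeff_zero a h0
  calc m < Fintype.card F ^ (K + 1) := hm
    _ ≤ Fintype.card F ^ j := Nat.pow_le_pow_right (by have := two_le_q (F := F); omega) (by omega)

lemma delta_deltaInv (h0 : a 0 = 0) (m : ℕ) : delta a (deltaInv a m) = m := by
  have hq2 : 2 ≤ qc := two_le_q
  set N := (deltaInv a m).natDegree with hN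
  have hlt : m < qc ^ (N + 1) := by
    by_contra hcon
    push_neg at hcon
    have hm0 : m ≠ 0 := by
      intro h; rw [h] at hcon
      have : 0 < qc ^ (N + 1) := pow_pos (by omega) _
      omega
    set j := Nat.log qc m with hj
    have h1 : qc ^ j ≤ m := Nat.pow_log_le_self qc hm0
    have h2 : m < qc ^ (j+1) := Nat.lt_pow_succ_log_self (by omega) m
    have hdig : 1 ≤ m / qc ^ j % qc := by
      have hdiv1 : 1 ≤ m / qc ^ j := (Nat.one_le_div_iff (pow_pos (by omega) _)).2 h1
      have hdiv2 : m / qc ^ j < qc := by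
        rw [Nat.div_lt_iff_lt_mul (pow_pos (by omega) _)]
        calc m < qc ^ (j+1) := h2
          _ = qc * qc ^ j := by rw [pow_succ, mul_comm]
      rw [Nat.mod_eq_of_lt hdiv2]; exact hdiv1
    have hcoeff : (deltaInv a m).coeff j ≠ 0 := by
      rw [deltaInv_coeff a h0]
      intro hzero
      rw [← h0] at hzero
      have := a.injective hzero
      have : m / qc ^ j % qc = (0 : Fin qc).val := by rw [← this]
      rw [Fin.val_zero] at this
      omega
    have hjN : j ≤ N := le_natDegree_of_ne_zero hcoeff
    have : N + 1 ≤ j := (Nat.le_log_iff_pow_le (by omega) hm0).2 hcon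
    omega
  unfold delta
  have hcoe : ∀ j, ((a.symm ((deltaInv a m).coeff j)) : ℕ) = m / qc ^ j % qc := by
    intro j
    rw [deltaInv_coeff a h0, Equiv.symm_apply_apply]
  calc ∑ j ∈ Finset.range (N + 1), ((a.symm ((deltaInv a m).coeff j)) : ℕ) * qc ^ j
      = ∑ j ∈ Finset.range (N + 1), m / qc ^ j % qc * qc ^ j :=
        Finset.sum_congr rfl fun j _ => by rw [hcoe j]
    _ = m % qc ^ (N + 1) := digit_sum_eq_mod qc m (N + 1) (by omega)
    _ = m := Nat.mod_eq_of_lt hlt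

lemma delta_lt (h0 : a 0 = 0) {g : F[X]} {K : ℕ} (hg : g.natDegree ≤ K) :
    delta a g < Fintype.card F ^ (K + 1) := by
  unfold delta
  apply sum_lt_pow _ _ (by have := two_le_q (F := F); omega)
  · intro j _; exact (a.symm (g.coeff j)).isLt
  · intro j hj
    have := Finset.mem_range.1 hj
    omega

lemma delta_ge (h0 : a 0 = 0) {g : F[X]} (hg : g ≠ 0) :
    Fintype.card F ^ g.natDegree ≤ delta a g := by
  unfold delta
  have hmem : g.natDegree ∈ Finset.range (g.natDegree + 1) := Finset.mem_range.2 (by omega)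
  have h1 : 1 ≤ ((a.symm (g.coeff g.natDegree)) : ℕ) := by
    rcases Nat.eq_zero_or_pos ((a.symm (g.coeff g.natDegree)) : ℕ) with h | h
    · exfalso
      have hz : a.symm (g.coeff g.natDegree) = 0 := Fin.ext (by rw [h, Fin.val_zero])
      have : g.coeff g.natDegree = a 0 := by
        rw [← hz, Equiv.apply_symm_apply]
      rw [h0] at this
      exact (mt leadingCoeff_eq_zero.1 hg) this
    · omega
  calc Fintype.card F ^ g.natDegree = 1 * Fintype.card F ^ g.natDegree := (one_mul _).symm
    _ ≤ ((a.symm (g.coeff g.natDegree)) : ℕ) * Fintype.card F ^ g.natDegree :=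
        Nat.mul_le_mul_right _ h1
    _ ≤ _ := Finset.single_le_sum (f := fun j => ((a.symm (g.coeff j)) : ℕ) * Fintype.card F ^ j)
        (fun _ _ => Nat.zero_le _) hmem

lemma deltaInv_delta (h0 : a 0 = 0) (g : F[X]) : deltaInv a (delta a g) = g := by
  have hq2 : 2 ≤ qc := two_le_q
  set N := g.natDegree with hN
  ext j
  rw [deltaInv_coeff a h0]
  have hdig : delta a g / qc ^ j % qc = if j < N + 1 then ((a.symm (g.coeff j)) : ℕ) else 0 := by
    unfold delta
    exact digit_of_sum qc (N + 1) j _ (by omega) (fun i _ => (a.symm (g.coeff i)).isLt)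
  by_cases hj : j < N + 1
  · have hd : delta a g / qc ^ j % qc = ((a.symm (g.coeff j)) : ℕ) := by rw [hdig, if_pos hj]
    rw [a_mk_congr a _ (a.symm (g.coeff j)).isLt hd, Fin.eta, Equiv.apply_symm_apply]
  · have : delta a g / qc ^ j % qc = 0 := by rw [hdig, if_neg hj]
    rw [a_mk_zero a h0 _ this, eq_comm]
    exact coeff_eq_zero_of_natDegree_lt (by omega)

lemma deltaInv_inj (h0 : a 0 = 0) : Function.Injective (deltaInv a) := by
  intro m m' h
  rw [← delta_deltaInv a h0 m, h, delta_deltaInv a h0]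

lemma deltaInv_shift (h0 : a 0 = 0) (b r D : ℕ) (hr : r < qc ^ D) :
    deltaInv a (b * qc ^ D + r) = X ^ D * deltaInv a b + deltaInv a r := by
  have hq2 : 2 ≤ qc := two_le_q
  have hqD : 0 < qc ^ D := pow_pos (by omega) _
  ext j
  rw [coeff_add, deltaInv_coeff a h0, mul_comm (X ^ D), coeff_mul_X_pow']
  by_cases hj : D ≤ j
  · rw [if_pos hj, deltaInv_coeff a h0, deltaInv_coeff_zero a h0 (lt_of_lt_of_le hr
      (Nat.pow_le_pow_right (by omega) hj)), add_zero]
    apply a_mk_congr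
    have e1 : (b * qc ^ D + r) / qc ^ D = b := by
      rw [mul_comm, Nat.mul_add_div hqD, Nat.div_eq_of_lt hr, add_zero]
    have e2 : (b * qc ^ D + r) / qc ^ j = b / qc ^ (j - D) := by
      have hpow : qc ^ j = qc ^ D * qc ^ (j - D) := by
        rw [← pow_add]; congr 1; omega
      rw [hpow, ← Nat.div_div_eq_div_mul, e1]
    rw [e2]
  · rw [if_neg hj, zero_add, deltaInv_coeff a h0]
    apply a_mk_congr
    have e2 : (b * qc ^ D + r) / qc ^ j = b * qc ^ (D - j) + r / qc ^ j := by
      have : b * qc ^ D = qc ^ j * (b * qc ^ (D - j)) := by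
        rw [← mul_assoc, mul_comm (qc ^ j), mul_assoc, ← pow_add]
        congr 2
        omega
      rw [this, Nat.mul_add_div (pow_pos (by omega) _)]
    rw [e2]
    have : b * qc ^ (D - j) + r / qc ^ j = r / qc ^ j + qc * (b * qc ^ (D - j - 1)) := by
      have : qc ^ (D - j) = qc * qc ^ (D - j - 1) := by
        rw [← pow_succ']
        congr 1
        omega
      rw [this]; ring
    rw [this, Nat.add_mul_mod_self_left]

lemma hit_unique (h0 : a 0 = 0) {h : F[X]} (hh : 1 ≤ h.natDegree) (c : F[X]) {r r' : ℕ}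
    (hr : r < qc ^ h.natDegree) (hr' : r' < qc ^ h.natDegree)
    (H : h ∣ c - deltaInv a r) (H' : h ∣ c - deltaInv a r') : r = r' := by
  have hdvd : h ∣ deltaInv a r' - deltaInv a r := by
    have := dvd_sub H H'
    have e : c - deltaInv a r - (c - deltaInv a r') = deltaInv a r' - deltaInv a r := by ring
    rwa [e] at this
  by_contra hne
  have hne' : deltaInv a r' - deltaInv a r ≠ 0 := by
    intro hz
    exact hne ((deltaInv_inj a h0 (sub_eq_zero.1 hz)).symm)
  have hdeg : (deltaInv a r' - deltaInv a r).natDegree ≤ h.natDegree - 1 := by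
    have h1 : (deltaInv a r).natDegree ≤ h.natDegree - 1 :=
      natDegree_deltaInv_le a h0 (by
        have : h.natDegree - 1 + 1 = h.natDegree := by omega
        rw [this]; exact hr)
    have h2 : (deltaInv a r').natDegree ≤ h.natDegree - 1 :=
      natDegree_deltaInv_le a h0 (by
        have : h.natDegree - 1 + 1 = h.natDegree := by omega
        rw [this]; exact hr')
    exact (natDegree_sub_le _ _).trans (by omega)
  have := Polynomial.natDegree_le_of_dvd hdvd hne'
  omega

lemma hit_exists (h0 : a 0 = 0) {h : F[X]} (hh : 1 ≤ h.natDegree) (c : F[X]) :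
    ∃ r, r < qc ^ h.natDegree ∧ h ∣ c - deltaInv a r := by
  have hne : h ≠ 0 := fun hz => by simp [hz] at hh
  set h₁ := h * C h.leadingCoeff⁻¹ with hh₁
  have hmonic : h₁.Monic := monic_mul_leadingCoeff_inv hne
  set ρ := c %ₘ h₁ with hρ
  refine ⟨delta a ρ, ?_, ?_⟩
  · have hdegρ : ρ.natDegree ≤ h.natDegree - 1 := by
      have hlt : ρ.degree < h₁.degree := degree_modByMonic_lt c hmonic
      have hdeq : h₁.degree = h.degree := degree_mul_leadingCoeff_inv h hne
      rcases eq_or_ne ρ 0 with h' | h'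
      · rw [h']; simp
      · have : ρ.natDegree < h.natDegree := by
          have := Polynomial.natDegree_lt_natDegree h' (by rw [← hdeq]; exact hlt)
          exact this
        omega
    have := delta_lt a h0 hdegρ
    have he : h.natDegree - 1 + 1 = h.natDegree := by omega
    rwa [he] at this
  · rw [deltaInv_delta a h0]
    have : c - ρ = h₁ * (c /ₘ h₁) := by
      rw [hρ, modByMonic_eq_sub_mul_div c h₁]; ring
    rw [this, hh₁]
    exact Dvd.dvd.mul_right (dvd_mul_right h _) _

open scoped Classical in
lemma card_hits (h0 : a 0 = 0) {h : F[X]} (hh : 1 ≤ h.natDegree) (g : F[X]) :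
    ((Finset.range (delta a g)).filter (fun m => h ∣ g - deltaInv a m)).card
      = delta a g / qc ^ h.natDegree := by
  have hq2 : 2 ≤ qc := two_le_q
  set D := h.natDegree with hD
  have hqD : 0 < qc ^ D := pow_pos (by omega) _
  set B := delta a g / qc ^ D with hB
  have hex : ∀ b : ℕ, ∃ r, r < qc ^ D ∧ h ∣ (g - X ^ D * deltaInv a b) - deltaInv a r :=
    fun b => hit_exists a h0 hh _
  choose rr hrlt hrdvd using hex
  have key : ∀ m, m ∈ (Finset.range (delta a g)).filter (fun m => h ∣ g - deltaInv a m) ↔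
      ∃ b < B, m = b * qc ^ D + rr b := by
    intro m
    rw [Finset.mem_filter, Finset.mem_range]
    constructor
    · rintro ⟨hmlt, hmdvd⟩
      set b := m / qc ^ D with hb
      set ρ := m % qc ^ D with hρ'
      have hm : m = b * qc ^ D + ρ := by
        rw [hb, hρ', mul_comm]
        exact (Nat.div_add_mod m (qc ^ D)).symm
      have hρlt : ρ < qc ^ D := Nat.mod_lt _ hqD
      have hsplit : deltaInv a m = X ^ D * deltaInv a b + deltaInv a ρ := by
        rw [hm]; exact deltaInv_shift a h0 b ρ D hρlt
      have hdvd' : h ∣ (g - X ^ D * deltaInv a b) - deltaInv a ρ := by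
        have : g - deltaInv a m = (g - X ^ D * deltaInv a b) - deltaInv a ρ := by
          rw [hsplit]; ring
        rwa [this] at hmdvd
      have hble : b ≤ B := by
        rw [hb, hB]; exact Nat.div_le_div_right hmlt.le
      have hbne : b ≠ B := by
        intro hbB
        set R := delta a g % qc ^ D with hR
        have hRlt : R < qc ^ D := Nat.mod_lt _ hqD
        have hgsplit : g = X ^ D * deltaInv a B + deltaInv a R := by
          conv_lhs => rw [← deltaInv_delta a h0 g]
          have : delta a g = B * qc ^ D + R := by
            rw [hB, hR, mul_comm]; exact (Nat.div_add_mod _ _).symm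
          rw [this]
          exact deltaInv_shift a h0 B R D hRlt
        have hRdvd : h ∣ (g - X ^ D * deltaInv a B) - deltaInv a R := by
          rw [hgsplit]
          have : X ^ D * deltaInv a B + deltaInv a R - X ^ D * deltaInv a B - deltaInv a R
              = 0 := by ring
          rw [this]
          exact dvd_zero h
        have : ρ = R := by
          rw [hbB] at hdvd'
          exact hit_unique a h0 hh _ hρlt hRlt hdvd' hRdvd
        have : m = delta a g := by
          rw [hm, this, hbB, hB, mul_comm]
          exact Nat.div_add_mod _ _
        omega
      have hρeq : ρ = rr b := hit_unique a h0 hh _ hρlt (hrlt b) hdvd' (hrdvd b)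
      exact ⟨b, by omega, by rw [hm, hρeq]⟩
    · rintro ⟨b, hbB, rfl⟩
      constructor
      · calc b * qc ^ D + rr b < b * qc ^ D + qc ^ D := by have := hrlt b; omega
          _ = (b + 1) * qc ^ D := by ring
          _ ≤ B * qc ^ D := Nat.mul_le_mul_right _ (by omega)
          _ ≤ delta a g := Nat.div_mul_le_self _ _
      · have hsplit : deltaInv a (b * qc ^ D + rr b) = X ^ D * deltaInv a b + deltaInv a (rr b) :=
          deltaInv_shift a h0 b (rr b) D (hrlt b)
        have : g - deltaInv a (b * qc ^ D + rr b)
            = (g - X ^ D * deltaInv a b) - deltaInv a (rr b) := by rw [hsplit]; ring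
        rw [this]
        exact hrdvd b
  have : (Finset.range (delta a g)).filter (fun m => h ∣ g - deltaInv a m)
      = (Finset.range B).image (fun b => b * qc ^ D + rr b) := by
    ext m
    rw [key m, Finset.mem_image]
    constructor
    · rintro ⟨b, hb, rfl⟩; exact ⟨b, Finset.mem_range.2 hb, rfl⟩
    · rintro ⟨b, hb, rfl⟩; exact ⟨b, Finset.mem_range.1 hb, rfl⟩
  rw [this, Finset.card_image_of_injective _ ?_, Finset.card_range]
  intro b b' hbb
  have e : ∀ x : ℕ, (x * qc ^ D + rr x) / qc ^ D = x := by
    intro x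
    rw [mul_comm, Nat.mul_add_div hqD, Nat.div_eq_of_lt (hrlt x), add_zero]
  calc b = (b * qc ^ D + rr b) / qc ^ D := (e b).symm
    _ = (b' * qc ^ D + rr b') / qc ^ D := by simp only at hbb; rw [hbb]
    _ = b' := e b'

end Delta

/-- The factorial of a polynomial: `f! = ∏_{g < f} (f - g)`, the product over all
polynomials `g` with `delta a g < delta a f`; in particular `0! = 1`. -/
noncomputable def pfact (a : Fin (Fintype.card F) ≃ F) (f : F[X]) : F[X] :=
  ∏ m ∈ Finset.range (delta a f), (f - deltaInv a m)

/-- The Smarandache function: `S a 0 = 0`, and for `f ≠ 0`, `S a f` is the smallest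
polynomial `g` (in the order given by `delta`) such that `f ∣ g!`. -/
noncomputable def S (a : Fin (Fintype.card F) ≃ F) (f : F[X]) : F[X] :=
  if f = 0 then 0 else deltaInv a (sInf {m : ℕ | f ∣ pfact a (deltaInv a m)})


section Mult

variable (a : Fin (Fintype.card F) ≃ F)

local notation "qc" => Fintype.card F

lemma pow_dvd_iff_le_count {P x : F[X]} (hP : Irreducible P) (hPn : normalize P = P)
    (hx : x ≠ 0) (k : ℕ) :
    P ^ k ∣ x ↔ k ≤ (normalizedFactors x).count P := by
  rw [pow_dvd_iff_le_emultiplicity,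
    UniqueFactorizationMonoid.le_emultiplicity_iff_replicate_le_normalizedFactors hP hx,
    hPn, ← Multiset.le_count_iff_replicate_le]

lemma count_nf_prod (P : F[X]) {ι : Type*} (s : Finset ι) (x : ι → F[X])
    (hx : ∀ i ∈ s, x i ≠ 0) :
    (normalizedFactors (∏ i ∈ s, x i)).count P
      = ∑ i ∈ s, (normalizedFactors (x i)).count P := by
  classical
  induction s using Finset.induction_on with
  | empty => simp [UniqueFactorizationMonoid.normalizedFactors_one]
  | insert i s' hni ih =>
    rw [Finset.prod_insert hni, UniqueFactorizationMonoid.normalizedFactors_mul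
      (hx i (Finset.mem_insert_self _ _))
      (Finset.prod_ne_zero_iff.2 fun j hj => hx j (Finset.mem_insert_of_mem hj)),
      Multiset.count_add, Finset.sum_insert hni, ih (fun j hj => hx j (Finset.mem_insert_of_mem hj))]

lemma pfact_factor_ne_zero (h0 : a 0 = 0) {g : F[X]} {m : ℕ} (hm : m < delta a g) :
    g - deltaInv a m ≠ 0 := by
  intro hz
  have : deltaInv a m = g := by
    have := sub_eq_zero.1 hz
    exact this.symm
  have : delta a (deltaInv a m) = delta a g := by rw [this]
  rw [delta_deltaInv a h0] at this
  omega

lemma pfact_ne_zero (h0 : a 0 = 0) (g : F[X]) : pfact a g ≠ 0 := by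
  unfold pfact
  rw [Finset.prod_ne_zero_iff]
  exact fun m hm => pfact_factor_ne_zero a h0 (Finset.mem_range.1 hm)

open scoped Classical in
lemma count_nf_pfact_ge (h0 : a 0 = 0) {P : F[X]} (hP : Irreducible P)
    (hPn : normalize P = P) (m₀ K : ℕ) :
    ∑ k ∈ Finset.Icc 1 K, m₀ / qc ^ (k * P.natDegree)
      ≤ (normalizedFactors (pfact a (deltaInv a m₀))).count P := by
  have hq2 : 2 ≤ qc := two_le_q
  have hd : 1 ≤ P.natDegree := hP.natDegree_pos
  set g := deltaInv a m₀ with hg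
  have hδ : delta a g = m₀ := delta_deltaInv a h0 m₀
  have hcount : ∀ k ∈ Finset.Icc 1 K,
      m₀ / qc ^ (k * P.natDegree)
        = ((Finset.range m₀).filter (fun m => P ^ k ∣ g - deltaInv a m)).card := by
    intro k hk
    have hk1 : 1 ≤ k := (Finset.mem_Icc.1 hk).1
    have hdeg : (P ^ k).natDegree = k * P.natDegree := natDegree_pow P k
    have hkd : 1 ≤ (P ^ k).natDegree := by
      rw [hdeg]
      exact Nat.one_le_iff_ne_zero.2 (Nat.mul_ne_zero (by omega) (by omega))
    have hc := card_hits a h0 hkd g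
    rw [hδ, hdeg] at hc
    exact hc.symm
  rw [Finset.sum_congr rfl hcount]
  have hsum : ∑ k ∈ Finset.Icc 1 K,
      ((Finset.range m₀).filter (fun m => P ^ k ∣ g - deltaInv a m)).card
      = ∑ m ∈ Finset.range m₀,
        ((Finset.Icc 1 K).filter (fun k => P ^ k ∣ g - deltaInv a m)).card := by
    simp only [Finset.card_filter]
    rw [Finset.sum_comm]
  rw [hsum]
  unfold pfact
  rw [hδ, count_nf_prod P _ _ (fun m hm => pfact_factor_ne_zero a h0
    (by rw [hδ]; exact Finset.mem_range.1 hm))]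
  apply Finset.sum_le_sum
  intro m hm
  have hne : g - deltaInv a m ≠ 0 :=
    pfact_factor_ne_zero a h0 (by rw [hδ]; exact Finset.mem_range.1 hm)
  have hsub : (Finset.Icc 1 K).filter (fun k => P ^ k ∣ g - deltaInv a m)
      ⊆ Finset.Icc 1 ((normalizedFactors (g - deltaInv a m)).count P) := by
    intro k hk
    rw [Finset.mem_filter, Finset.mem_Icc] at hk
    rw [Finset.mem_Icc]
    exact ⟨hk.1.1, (pow_dvd_iff_le_count hP hPn hne k).1 hk.2⟩
  calc ((Finset.Icc 1 K).filter (fun k => P ^ k ∣ g - deltaInv a m)).card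
      ≤ (Finset.Icc 1 ((normalizedFactors (g - deltaInv a m)).count P)).card :=
        Finset.card_le_card hsub
    _ = (normalizedFactors (g - deltaInv a m)).count P := by rw [Nat.card_Icc]; omega

lemma dvd_pfact_core (h0 : a 0 = 0) {f : F[X]} (hf0 : f ≠ 0) (m₀ : ℕ)
    (hcond : ∀ P ∈ normalizedFactors f,
      (normalizedFactors f).count P
        ≤ ∑ k ∈ Finset.Icc 1 f.natDegree, m₀ / qc ^ (k * P.natDegree)) :
    f ∣ pfact a (deltaInv a m₀) := by
  classical
  rw [UniqueFactorizationMonoid.dvd_iff_normalizedFactors_le_normalizedFactors hf0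
    (pfact_ne_zero a h0 _), Multiset.le_iff_count]
  intro P
  by_cases hmem : P ∈ normalizedFactors f
  · calc (normalizedFactors f).count P
        ≤ ∑ k ∈ Finset.Icc 1 f.natDegree, m₀ / qc ^ (k * P.natDegree) := hcond P hmem
      _ ≤ (normalizedFactors (pfact a (deltaInv a m₀))).count P :=
          count_nf_pfact_ge a h0 (irreducible_of_normalized_factor P hmem)
            (normalize_normalized_factor P hmem) m₀ f.natDegree
  · rw [Multiset.count_eq_zero_of_notMem hmem]
    exact Nat.zero_le _

end Mult

section Main

variable (a : Fin (Fintype.card F) ≃ F)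

local notation "qc" => Fintype.card F

lemma mem_main (h0 : a 0 = 0) {f : F[X]} (hf0 : f ≠ 0) (hn : 2 ≤ f.natDegree)
    (hred : ¬ Irreducible f) (hf : ∀ b c : F, f ≠ C b * (X + C c) ^ 2) :
    f ∣ pfact a (deltaInv a (qc ^ (f.natDegree - 1))) := by
  have hq2 : 2 ≤ qc := two_le_q
  set n := f.natDegree with hnn
  apply dvd_pfact_core a h0 hf0
  intro P hmem
  have hP : Irreducible P := irreducible_of_normalized_factor P hmem
  have hPn : normalize P = P := normalize_normalized_factor P hmem
  set d := P.natDegree with hdd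
  set e := (normalizedFactors f).count P with hee
  have hd : 1 ≤ d := hP.natDegree_pos
  have he1 : 1 ≤ e := Multiset.count_pos.2 hmem
  have hPe : P ^ e ∣ f := (pow_dvd_iff_le_count hP hPn hf0 e).2 le_rfl
  have hde : e * d ≤ n := by
    have := natDegree_le_of_dvd hPe hf0
    rwa [natDegree_pow] at this
  have hterm : ∀ k, k * d ≤ n - 1 → 1 ≤ qc ^ (n-1) / qc ^ (k * d) := by
    intro k hk
    rw [Nat.one_le_div_iff (pow_pos (by omega) _)]
    exact Nat.pow_le_pow_right (by omega) hk
  have hterm2 : ∀ k, k * d + 1 ≤ n - 1 → 2 ≤ qc ^ (n-1) / qc ^ (k * d) := by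
    intro k hk
    rw [Nat.le_div_iff_mul_le (pow_pos (by omega) _)]
    calc 2 * qc ^ (k * d) ≤ qc * qc ^ (k * d) := Nat.mul_le_mul_right _ hq2
      _ = qc ^ (k * d + 1) := by rw [pow_succ, mul_comm]
      _ ≤ qc ^ (n - 1) := Nat.pow_le_pow_right (by omega) hk
  rcases Nat.lt_or_ge (e * d) n with hlt | hge
  · -- e * d ≤ n - 1
    have hsub : Finset.Icc 1 e ⊆ Finset.Icc 1 n := by
      apply Finset.Icc_subset_Icc_right
      calc e ≤ e * d := Nat.le_mul_of_pos_right _ (by omega)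
        _ ≤ n := hde
    calc e = (Finset.Icc 1 e).card • 1 := by rw [Nat.card_Icc]; simp only [smul_eq_mul]; omega
      _ ≤ ∑ k ∈ Finset.Icc 1 e, qc ^ (n-1) / qc ^ (k * d) := by
          apply Finset.card_nsmul_le_sum
          intro k hk
          apply hterm
          have hk' := (Finset.mem_Icc.1 hk).2
          calc k * d ≤ e * d := Nat.mul_le_mul_right _ hk'
            _ ≤ n - 1 := by omega
      _ ≤ ∑ k ∈ Finset.Icc 1 n, qc ^ (n-1) / qc ^ (k * d) :=
          Finset.sum_le_sum_of_subset hsub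
  · -- e * d = n, f = P^e * unit
    have heq : e * d = n := le_antisymm hde hge
    obtain ⟨c, hc⟩ := hPe
    have hc0 : c ≠ 0 := by rintro rfl; rw [mul_zero] at hc; exact hf0 hc
    have hcdeg : c.natDegree = 0 := by
      have := congrArg natDegree hc
      rw [natDegree_mul (pow_ne_zero _ hP.ne_zero) hc0, natDegree_pow, ← hdd] at this
      omega
    have hcu : IsUnit c := by
      rw [Polynomial.eq_C_of_natDegree_eq_zero hcdeg]
      exact Polynomial.isUnit_C.2 (isUnit_iff_ne_zero.2 (by
        intro hz
        rw [Polynomial.eq_C_of_natDegree_eq_zero hcdeg, hz, map_zero] at hc0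
        exact hc0 rfl))
    have he2 : 2 ≤ e := by
      rcases Nat.lt_or_ge e 2 with h' | h'
      · exfalso
        have he' : e = 1 := by omega
        apply hred
        have hassoc : Associated P f := ⟨hcu.unit, by rw [IsUnit.unit_spec, hc, he', pow_one]⟩
        exact hassoc.irreducible hP
      · exact h'
    rcases Nat.lt_or_ge d 2 with hd1 | hd2
    · -- d = 1, so e = n
      have hd1' : d = 1 := by omega
      have hen : e = n := by rw [hd1', mul_one] at heq; omega
      have he3 : 3 ≤ e := by
        rcases Nat.lt_or_ge e 3 with h' | h'
        · exfalso
          have he' : e = 2 := by omega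
          have hPmonic : P.Monic := by
            have := Polynomial.monic_normalize (p := P) hP.ne_zero
            rwa [hPn] at this
          have hPX : P = X + C (P.coeff 0) := hPmonic.eq_X_add_C hd1'
          exact hf (c.coeff 0) (P.coeff 0) (by
            rw [hc, he', ← hPX, ← Polynomial.eq_C_of_natDegree_eq_zero hcdeg]; ring)
        · exact h'
      have hsub : Finset.Icc 1 (n-1) ⊆ Finset.Icc 1 n :=
        Finset.Icc_subset_Icc_right (by omega)
      have hsplit : ∑ k ∈ Finset.Icc 1 (n-1), qc ^ (n-1) / qc ^ (k * d)
          = ∑ k ∈ Finset.Icc 1 (n-2), qc ^ (n-1) / qc ^ (k * d)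
            + qc ^ (n-1) / qc ^ ((n-1) * d) := by
      -- n - 1 = (n - 2) + 1
        have hn1 : n - 1 = (n - 2) + 1 := by omega
        rw [hn1, Finset.sum_Icc_succ_top (by omega)]
      have hlast : qc ^ (n-1) / qc ^ ((n-1) * d) = 1 := by
        rw [hd1', mul_one, Nat.div_self (pow_pos (by omega) _)]
      have hmid : (Finset.Icc 1 (n-2)).card • 2
          ≤ ∑ k ∈ Finset.Icc 1 (n-2), qc ^ (n-1) / qc ^ (k * d) := by
        apply Finset.card_nsmul_le_sum
        intro k hk
        apply hterm2
        have := (Finset.mem_Icc.1 hk).2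
        rw [hd1', mul_one]
        omega
      rw [Nat.card_Icc] at hmid
      calc e = n := hen
        _ ≤ (n - 2 + 1 - 1) * 2 + 1 := by omega
        _ ≤ ∑ k ∈ Finset.Icc 1 (n-2), qc ^ (n-1) / qc ^ (k * d)
            + qc ^ (n-1) / qc ^ ((n-1) * d) := by
            rw [hlast]; have := hmid; simp only [smul_eq_mul] at this; omega
        _ = ∑ k ∈ Finset.Icc 1 (n-1), qc ^ (n-1) / qc ^ (k * d) := hsplit.symm
        _ ≤ ∑ k ∈ Finset.Icc 1 n, qc ^ (n-1) / qc ^ (k * d) :=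
            Finset.sum_le_sum_of_subset hsub
    · -- d ≥ 2
      have hsub : Finset.Icc 1 (e-1) ⊆ Finset.Icc 1 n := by
        apply Finset.Icc_subset_Icc_right
        have : e ≤ e * d := Nat.le_mul_of_pos_right _ (by omega)
        omega
      have hmid : (Finset.Icc 1 (e-1)).card • 2
          ≤ ∑ k ∈ Finset.Icc 1 (e-1), qc ^ (n-1) / qc ^ (k * d) := by
        apply Finset.card_nsmul_le_sum
        intro k hk
        apply hterm2
        have hk' := (Finset.mem_Icc.1 hk).2
        have h1 : k * d + d ≤ e * d := by
          calc k * d + d = (k + 1) * d := by ring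
            _ ≤ e * d := Nat.mul_le_mul_right _ (by omega)
        omega
      rw [Nat.card_Icc] at hmid
      simp only [smul_eq_mul] at hmid
      calc e ≤ (e - 1 + 1 - 1) * 2 := by omega
        _ ≤ ∑ k ∈ Finset.Icc 1 (e-1), qc ^ (n-1) / qc ^ (k * d) := hmid
        _ ≤ ∑ k ∈ Finset.Icc 1 n, qc ^ (n-1) / qc ^ (k * d) :=
            Finset.sum_le_sum_of_subset hsub

end Main
lemma sum_Icc_pow_reindex (q n : ℕ) :
    ∑ k ∈ Finset.Icc 1 n, q ^ (n - k) = ∑ j ∈ Finset.range n, q ^ j := by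
  induction n with
  | zero => simp
  | succ n ih =>
    rw [Finset.sum_Icc_succ_top (by omega), Finset.sum_range_succ']
    have h1 : ∑ k ∈ Finset.Icc 1 n, q ^ (n + 1 - k) = q * ∑ k ∈ Finset.Icc 1 n, q ^ (n - k) := by
      rw [Finset.mul_sum]
      apply Finset.sum_congr rfl
      intro k hk
      have hk' := (Finset.mem_Icc.1 hk).2
      have : n + 1 - k = (n - k) + 1 := by omega
      rw [this, pow_succ, mul_comm]
    rw [h1, ih, Finset.mul_sum]
    simp [pow_succ, mul_comm, Nat.sub_self]

lemma two_pow_ge (n : ℕ) (h : 4 ≤ n) : 2 * n ≤ 2 ^ (n - 1) := by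
  induction n with
  | zero => omega
  | succ n ih =>
    rcases Nat.lt_or_ge n 4 with h' | h'
    · interval_cases n <;> simp_all <;> omega
    · have := ih (by omega)
      have h2 : n - 1 + 1 = n := by omega
      have h3 : (2:ℕ) ^ n = 2 * 2 ^ (n - 1) := by
        rw [← pow_succ', h2]
      have h4 : n + 1 - 1 = n := by omega
      rw [h4, h3]
      omega

lemma sum_pow_ge_two (q t : ℕ) (hq : 2 ≤ q) :
    2 ^ t - 1 ≤ ∑ j ∈ Finset.range t, q ^ j := by
  have h1 : ∑ j ∈ Finset.range t, (2:ℕ) ^ j = 2 ^ t - 1 := by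
    have := geom_mul 2 t (by omega)
    simpa using this
  rw [← h1]
  exact Finset.sum_le_sum fun j _ => Nat.pow_le_pow_left hq j

lemma key_ineq (q n : ℕ) (hq : 2 ≤ q) (hn : 2 ≤ n)
    (hnum : 2 * n - 1 ≤ ∑ j ∈ Finset.range (n - 1), q ^ j) :
    n ≤ ∑ k ∈ Finset.Icc 1 n, (q ^ (n - 1) - 1) / q ^ k := by
  have hterm : ∀ k ∈ Finset.Icc 1 (n - 1), (q ^ (n-1) - 1) / q ^ k = q ^ (n - 1 - k) - 1 := by
    intro k hk
    have hk' := Finset.mem_Icc.1 hk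
    have hA : 1 ≤ q ^ k := Nat.one_le_pow _ _ (by omega)
    have hB : 1 ≤ q ^ (n - 1 - k) := Nat.one_le_pow _ _ (by omega)
    have hAB : q ^ k * q ^ (n - 1 - k) = q ^ (n - 1) := by
      rw [← pow_add]; congr 1; omega
    have ht : q ^ k * (q ^ (n - 1 - k) - 1) = q ^ k * q ^ (n - 1 - k) - q ^ k := by
      rw [Nat.mul_sub, mul_one]
    have hsplit : q ^ (n-1) - 1 = (q ^ k - 1) + q ^ k * (q ^ (n - 1 - k) - 1) := by
      rw [ht, hAB]
      have : q ^ k ≤ q ^ (n - 1) := by rw [← hAB]; exact Nat.le_mul_of_pos_right _ (by omega)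
      omega
    rw [hsplit, Nat.add_mul_div_left _ _ (by positivity), Nat.div_eq_of_lt (by omega), zero_add]
  have hsum : ∑ k ∈ Finset.Icc 1 (n-1), (q ^ (n - 1 - k) - 1) + (n - 1)
      = ∑ j ∈ Finset.range (n-1), q ^ j := by
    have h1 : ∑ k ∈ Finset.Icc 1 (n-1), ((q ^ (n - 1 - k) - 1) + 1)
        = ∑ k ∈ Finset.Icc 1 (n-1), q ^ (n - 1 - k) :=
      Finset.sum_congr rfl fun k _ => by
        have : 1 ≤ q ^ (n - 1 - k) := Nat.one_le_pow _ _ (by omega)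
        omega
    rw [Finset.sum_add_distrib, Finset.sum_const, Nat.card_Icc, smul_eq_mul, mul_one] at h1
    rw [sum_Icc_pow_reindex q (n-1)] at h1
    omega
  calc n ≤ ∑ k ∈ Finset.Icc 1 (n-1), (q ^ (n - 1 - k) - 1) := by omega
    _ = ∑ k ∈ Finset.Icc 1 (n-1), (q ^ (n-1) - 1) / q ^ k :=
        (Finset.sum_congr rfl hterm).symm
    _ ≤ ∑ k ∈ Finset.Icc 1 n, (q ^ (n-1) - 1) / q ^ k :=
        Finset.sum_le_sum_of_subset (Finset.Icc_subset_Icc_right (by omega))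

section Final

variable (a : Fin (Fintype.card F) ≃ F)

local notation "qc" => Fintype.card F

lemma deltaInv_q_pow (h0 : a 0 = 0) (h1 : a 1 = 1) (n : ℕ) :
    deltaInv a (qc ^ n) = X ^ n := by
  have hq2 : 2 ≤ qc := two_le_q
  ext j
  rw [deltaInv_coeff a h0, coeff_X_pow]
  rcases lt_trichotomy j n with hj | hj | hj
  · rw [if_neg (by omega)]
    apply a_mk_zero a h0
    have h1' : qc ^ n / qc ^ j = qc ^ (n - j) := Nat.pow_div (by omega) (by omega)
    have h2 : qc ^ (n - j) = qc * qc ^ (n - j - 1) := by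
      rw [← pow_succ']; congr 1; omega
    rw [h1', h2, Nat.mul_mod_right]
  · subst hj
    rw [if_pos rfl, Nat.div_self (pow_pos (by omega) _), ← h1]
    exact congrArg a (Fin.ext (by rw [Fin.val_one']))
  · rw [if_neg (by omega)]
    apply a_mk_zero a h0
    rw [Nat.div_eq_of_lt (Nat.pow_lt_pow_right (by omega) hj), Nat.zero_mod]

lemma delta_X_pow (h0 : a 0 = 0) (h1 : a 1 = 1) (n : ℕ) :
    delta a ((X : F[X]) ^ n) = qc ^ n := by
  conv_lhs => rw [← deltaInv_q_pow a h0 h1 n]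
  exact delta_deltaInv a h0 _

lemma mem_strict (h0 : a 0 = 0) {n : ℕ} (hn : 2 ≤ n)
    (hnum : 2 * n - 1 ≤ ∑ j ∈ Finset.range (n - 1), qc ^ j) :
    (X : F[X]) ^ n ∣ pfact a (deltaInv a (qc ^ (n - 1) - 1)) := by
  have hq2 : 2 ≤ qc := two_le_q
  have hXn0 : (X : F[X]) ^ n ≠ 0 := pow_ne_zero _ X_ne_zero
  apply dvd_pfact_core a h0 hXn0
  intro P hmem
  have hP : Irreducible P := irreducible_of_normalized_factor P hmem
  have hPn : normalize P = P := normalize_normalized_factor P hmem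
  have hPX : P = X := by
    have hdvd : P ∣ (X : F[X]) ^ n := dvd_of_mem_normalizedFactors hmem
    have hprime : Prime P := UniqueFactorizationMonoid.prime_of_normalized_factor P hmem
    have hPdvdX : P ∣ (X : F[X]) := hprime.dvd_of_dvd_pow hdvd
    have hassoc : Associated P (X : F[X]) :=
      hP.associated_of_dvd irreducible_X hPdvdX
    calc P = normalize P := hPn.symm
      _ = normalize (X : F[X]) := normalize_eq_normalize hassoc.dvd hassoc.symm.dvd
      _ = X := monic_X.normalize_eq_self
  subst hPX
  set e := (normalizedFactors ((X : F[X]) ^ n)).count X with hee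
  have he : e ≤ n := by
    have hXe : (X : F[X]) ^ e ∣ X ^ n :=
      (pow_dvd_iff_le_count hP hPn hXn0 e).2 le_rfl
    have := natDegree_le_of_dvd hXe hXn0
    rwa [natDegree_pow, natDegree_pow, natDegree_X, mul_one, mul_one] at this
  simp only [natDegree_pow, natDegree_X, one_mul, mul_one]
  exact he.trans (key_ineq qc n hq2 hn hnum)

open scoped Classical in
lemma not_dvd_X_cube (h0 : a 0 = 0) (hq3 : qc ≤ 3) {m : ℕ} (hm : m < qc ^ 2) :
    ¬ ((X : F[X]) ^ 3 ∣ pfact a (deltaInv a m)) := by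
  intro hdvd
  have hq2 : 2 ≤ qc := two_le_q
  set g := deltaInv a m with hg
  have hδ : delta a g = m := delta_deltaInv a h0 m
  have hGne : pfact a g ≠ 0 := pfact_ne_zero a h0 g
  have hX : Irreducible (X : F[X]) := irreducible_X
  have hXn : normalize (X : F[X]) = X := monic_X.normalize_eq_self
  have h3 : 3 ≤ (normalizedFactors (pfact a g)).count X :=
    (pow_dvd_iff_le_count hX hXn hGne 3).1 hdvd
  have hdegg : g.natDegree ≤ 1 := natDegree_deltaInv_le a h0 (by simpa using hm)
  have hcount : (normalizedFactors (pfact a g)).count X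
      = ∑ k ∈ Finset.range m, (normalizedFactors (g - deltaInv a k)).count X := by
    unfold pfact
    rw [hδ, count_nf_prod X _ _ (fun k hk => pfact_factor_ne_zero a h0
      (by rw [hδ]; exact Finset.mem_range.1 hk))]
  have hbound : ∀ k ∈ Finset.range m, (normalizedFactors (g - deltaInv a k)).count X
      ≤ if (X : F[X]) ∣ g - deltaInv a k then 1 else 0 := by
    intro k hk
    have hkm : k < m := Finset.mem_range.1 hk
    have hne : g - deltaInv a k ≠ 0 := pfact_factor_ne_zero a h0 (by rw [hδ]; exact hkm)
    by_cases hXdvd : (X : F[X]) ∣ g - deltaInv a k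
    · rw [if_pos hXdvd]
      set ν := (normalizedFactors (g - deltaInv a k)).count X with hν
      have hXν : (X : F[X]) ^ ν ∣ g - deltaInv a k :=
        (pow_dvd_iff_le_count hX hXn hne ν).2 le_rfl
      have hdeg := natDegree_le_of_dvd hXν hne
      rw [natDegree_pow, natDegree_X, mul_one] at hdeg
      have hdegk : (deltaInv a k).natDegree ≤ 1 := natDegree_deltaInv_le a h0
        (by simp only [Nat.reduceAdd]; omega)
      have : (g - deltaInv a k).natDegree ≤ 1 := (natDegree_sub_le _ _).trans (by omega)
      omega
    · rw [if_neg hXdvd]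
      by_contra hpos
      have h1' : 1 ≤ (normalizedFactors (g - deltaInv a k)).count X := by omega
      have := (pow_dvd_iff_le_count hX hXn hne 1).2 h1'
      rw [pow_one] at this
      exact hXdvd this
  have hsum : ∑ k ∈ Finset.range m, (if (X : F[X]) ∣ g - deltaInv a k then 1 else 0)
      = ((Finset.range m).filter (fun k => (X : F[X]) ∣ g - deltaInv a k)).card := by
    rw [Finset.card_filter]
  have hcard : ((Finset.range (delta a g)).filter
      (fun k => (X : F[X]) ∣ g - deltaInv a k)).card = delta a g / qc ^ (X : F[X]).natDegree :=
    card_hits a h0 (by rw [natDegree_X]) g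
  rw [hδ, natDegree_X, pow_one] at hcard
  have hdivlt : m / qc < qc := by
    rw [Nat.div_lt_iff_lt_mul (by omega)]
    calc m < qc ^ 2 := hm
      _ = qc * qc := by rw [pow_two]
  have : (normalizedFactors (pfact a g)).count X ≤ m / qc := by
    rw [hcount, ← hcard]
    calc ∑ k ∈ Finset.range m, (normalizedFactors (g - deltaInv a k)).count X
        ≤ ∑ k ∈ Finset.range m, (if (X : F[X]) ∣ g - deltaInv a k then 1 else 0) :=
          Finset.sum_le_sum hbound
      _ = _ := hsum
  omega

end Final

/-- Proposition 3.5: if `f` of degree `≥ 1` is reducible and `f ≠ b (t + c)²` for all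
`b, c ∈ F_q`, then `δ(S(f)) ≤ δ(f)/q`, with equality iff `q = 2` or `q = 3` and `f = t³`. -/
theorem delta_smarandache_le (a : Fin (Fintype.card F) ≃ F) (h0 : a 0 = 0) (h1 : a 1 = 1)
    (f : F[X]) (hdeg : 1 ≤ f.natDegree) (hred : ¬ Irreducible f)
    (hf : ∀ b c : F, f ≠ C b * (X + C c) ^ 2) :
    Fintype.card F * delta a (S a f) ≤ delta a f ∧
      (Fintype.card F * delta a (S a f) = delta a f ↔
        (Fintype.card F = 2 ∨ Fintype.card F = 3) ∧ f = X ^ 3) := by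
  have hq2 : 2 ≤ Fintype.card F := two_le_q
  have hf0 : f ≠ 0 := fun hz => by rw [hz] at hdeg; simp at hdeg
  set n := f.natDegree with hnn
  have hn2 : 2 ≤ n := by
    rcases Nat.lt_or_ge n 2 with h' | h'
    · exfalso
      apply hred
      apply Polynomial.irreducible_of_degree_eq_one
      have hn1 : n = 1 := by omega
      exact (degree_eq_iff_natDegree_eq hf0).2 hn1
    · exact h'
  set ms := sInf {m : ℕ | f ∣ pfact a (deltaInv a m)} with hms
  have hSf : S a f = deltaInv a ms := by unfold S; rw [if_neg hf0]
  have hdS : delta a (S a f) = ms := by rw [hSf, delta_deltaInv a h0]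
  have hmem1 : Fintype.card F ^ (n - 1) ∈ {m : ℕ | f ∣ pfact a (deltaInv a m)} :=
    mem_main a h0 hf0 hn2 hred hf
  have hmsle : ms ≤ Fintype.card F ^ (n - 1) := Nat.sInf_le hmem1
  have hpow : Fintype.card F * Fintype.card F ^ (n - 1) = Fintype.card F ^ n := by
    rw [← pow_succ']; congr 1; omega
  have hδge : Fintype.card F ^ n ≤ delta a f := delta_ge a h0 hf0
  have hmsn : Fintype.card F * ms ≤ Fintype.card F ^ n := by
    calc Fintype.card F * ms ≤ Fintype.card F * Fintype.card F ^ (n - 1) :=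
        Nat.mul_le_mul_left _ hmsle
      _ = Fintype.card F ^ n := hpow
  have hmain : Fintype.card F * delta a (S a f) ≤ delta a f := by
    rw [hdS]; exact hmsn.trans hδge
  refine ⟨hmain, ?_, ?_⟩
  · -- equality implies (q = 2 ∨ q = 3) ∧ f = X^3
    intro heq
    rw [hdS] at heq
    have hδeq : delta a f = Fintype.card F ^ n := le_antisymm (by omega) hδge
    have hmseq : ms = Fintype.card F ^ (n - 1) := by
      have : Fintype.card F * ms = Fintype.card F * Fintype.card F ^ (n - 1) := by
        rw [hpow]; omega
      exact Nat.eq_of_mul_eq_mul_left (by omega) this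
    have hfX : f = X ^ n := by
      have hinv := deltaInv_delta a h0 f
      rw [hδeq, deltaInv_q_pow a h0 h1 n] at hinv
      exact hinv.symm
    have hn3' : 3 ≤ n := by
      rcases Nat.lt_or_ge n 3 with h' | h'
      · exfalso
        have hn2' : n = 2 := by omega
        apply hf 1 0
        rw [hfX, hn2']
        simp
      · exact h'
    have hkey : n = 3 ∧ Fintype.card F ≤ 3 := by
      by_contra hcon
      have hnum : 2 * n - 1 ≤ ∑ j ∈ Finset.range (n - 1), Fintype.card F ^ j := by
        rcases Nat.lt_or_ge n 4 with h4 | h4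
        · -- n = 3, so q ≥ 4
          have hn3 : n = 3 := by omega
          have hq4 : 4 ≤ Fintype.card F := by
            by_contra hq'
            exact hcon ⟨hn3, by omega⟩
          rw [hn3]
          rw [show (3:ℕ) - 1 = 2 from rfl]
          rw [Finset.sum_range_succ, Finset.sum_range_one]
          simp only [pow_zero, pow_one]
          omega
        · -- n ≥ 4
          have h1' := sum_pow_ge_two (Fintype.card F) (n - 1) hq2
          have h2' := two_pow_ge n h4
          omega
      have hmem2 := mem_strict a h0 hn2 hnum
      rw [← hfX] at hmem2
      have hle2 : ms ≤ Fintype.card F ^ (n - 1) - 1 := Nat.sInf_le hmem2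
      have : 1 ≤ Fintype.card F ^ (n - 1) := Nat.one_le_pow _ _ (by omega)
      omega
    refine ⟨by omega, ?_⟩
    rw [hfX, hkey.1]
  · -- backward
    rintro ⟨hq, hfX⟩
    have hn3 : n = 3 := by rw [hnn, hfX, natDegree_X_pow]
    have hq3 : Fintype.card F ≤ 3 := by rcases hq with h | h <;> omega
    have hδ3 : delta a f = Fintype.card F ^ 3 := by rw [hfX]; exact delta_X_pow a h0 h1 3
    have hub : ms ≤ Fintype.card F ^ 2 := by
      rw [hn3] at hmsle
      simpa using hmsle
    have hlb : Fintype.card F ^ 2 ≤ ms := by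
      by_contra hcon
      push_neg at hcon
      have hne : {m : ℕ | f ∣ pfact a (deltaInv a m)}.Nonempty := ⟨_, hmem1⟩
      have hmem := Nat.sInf_mem hne
      rw [← hms] at hmem
      have hmem' : f ∣ pfact a (deltaInv a ms) := hmem
      rw [hfX] at hmem'
      exact not_dvd_X_cube a h0 hq3 hcon hmem'
    have hmseq : ms = Fintype.card F ^ 2 := le_antisymm hub hlb
    rw [hdS, hmseq, hδ3]
    rw [← pow_succ']
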